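/- Let W_1, ..., W_d be subspaces of R^p with orthogonal projections P_1, ..., P_d. Fix k and suppose y = ỹ + ỹ⊥ with ỹ ∈ W_k, ỹ ≠ 0, ỹ⊥ ⊥ W_k, and ‖ỹ⊥‖ ≤ ε‖ỹ‖ for some ε ≥ 0. If η := max_{j≠k} ‖P_j P_k‖ satisfies η < 1 − ε, then for every j ≠ k, ‖P_j y‖ < ‖P_k y‖. In particular, k = argmax_j ‖P_j y‖ and classification by maximal projection energy is correct. -/

import Mathlib

/-! A signal `x ∈ W_k` is seen in full by `P_k`, while `P_j` sees at most `η ‖x‖` of it;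
the noise `z ⊥ W_k` is invisible to `P_k` and adds at most `‖z‖ ≤ ε ‖x‖` to `P_j`.
So `‖P_j (x + z)‖ ≤ (η + ε) ‖x‖ < ‖x‖ = ‖P_k (x + z)‖`. -/

noncomputable def proj {p : ℕ} (K : Submodule ℝ (EuclideanSpace ℝ (Fin p))) :
    EuclideanSpace ℝ (Fin p) →L[ℝ] EuclideanSpace ℝ (Fin p) :=
  K.subtypeL.comp (K.orthogonalProjection)

namespace Submodule

variable {𝕜 E : Type*} [RCLike 𝕜] [NormedAddCommGroup E] [InnerProductSpace 𝕜 E]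
  (K L : Submodule 𝕜 E) [K.HasOrthogonalProjection] [L.HasOrthogonalProjection]

theorem starProjection_add_of_mem_of_mem_orthogonal {x z : E} (hx : x ∈ K) (hz : z ∈ Kᗮ) :
    K.starProjection (x + z) = x := by
  rw [map_add, starProjection_eq_self_iff.mpr hx, (starProjection_apply_eq_zero_iff K).mpr hz,
    add_zero]

theorem norm_starProjection_add_le {x : E} (hx : x ∈ K) (z : E) :
    ‖L.starProjection (x + z)‖ ≤ ‖L.starProjection ∘L K.starProjection‖ * ‖x‖ + ‖z‖ := by
  have hx' : (L.starProjection ∘L K.starProjection) x = L.starProjection x := by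
    rw [ContinuousLinearMap.comp_apply, starProjection_eq_self_iff.mpr hx]
  calc ‖L.starProjection (x + z)‖ ≤ ‖L.starProjection x‖ + ‖L.starProjection z‖ := by
        rw [map_add]; exact norm_add_le _ _
    _ ≤ ‖L.starProjection ∘L K.starProjection‖ * ‖x‖ + ‖z‖ := by
        gcongr
        · exact hx' ▸ (L.starProjection ∘L K.starProjection).le_opNorm x
        · exact L.norm_starProjection_apply_le z

theorem norm_starProjection_lt_of_mem_add_mem_orthogonal {x z : E} (hx : x ∈ K) (hx0 : x ≠ 0)
    (hz : z ∈ Kᗮ) {ε : ℝ} (hz_le : ‖z‖ ≤ ε * ‖x‖)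
    (hη : ‖L.starProjection ∘L K.starProjection‖ < 1 - ε) :
    ‖L.starProjection (x + z)‖ < ‖K.starProjection (x + z)‖ := by
  rw [K.starProjection_add_of_mem_of_mem_orthogonal hx hz]
  have hx_pos : 0 < ‖x‖ := norm_pos_iff.mpr hx0
  calc ‖L.starProjection (x + z)‖
      ≤ ‖L.starProjection ∘L K.starProjection‖ * ‖x‖ + ε * ‖x‖ := by
        linarith [K.norm_starProjection_add_le L hx z]
    _ < (1 - ε) * ‖x‖ + ε * ‖x‖ := by gcongr
    _ = ‖x‖ := by ring

end Submodule

theorem stmt2_general {p d : ℕ} (W : Fin d → Submodule ℝ (EuclideanSpace ℝ (Fin p)))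
    (k : Fin d) (ε : ℝ)
    (y ytil yperp : EuclideanSpace ℝ (Fin p))
    (hytil : ytil ∈ W k) (hytil0 : ytil ≠ 0) (hyperp : yperp ∈ (W k)ᗮ)
    (hdecomp : y = ytil + yperp) (hsmall : ‖yperp‖ ≤ ε * ‖ytil‖)
    (hη : ∀ j, j ≠ k → ‖(proj (W j)).comp (proj (W k))‖ < 1 - ε) :
    ∀ j, j ≠ k → ‖proj (W j) y‖ < ‖proj (W k) y‖ := fun j hj =>
  hdecomp ▸ (W k).norm_starProjection_lt_of_mem_add_mem_orthogonal (W j) hytil hytil0 hyperp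
    hsmall (hη j hj)

/-- Main classification guarantee: if the worst-case alignment
`η = max_{j ≠ k} ‖P_j P_k‖ < 1 - ε` and `‖ỹ⊥‖ ≤ ε ‖ỹ‖`, then the projection onto the
correct subspace `W_k` is strictly the largest, so classification by maximal
projection energy is correct. -/
theorem stmt2 {p d : ℕ} (W : Fin d → Submodule ℝ (EuclideanSpace ℝ (Fin p)))
    (k : Fin d) (ε : ℝ) (hε : 0 ≤ ε)
    (y ytil yperp : EuclideanSpace ℝ (Fin p))
    (hytil : ytil ∈ W k) (hytil0 : ytil ≠ 0) (hyperp : yperp ∈ (W k)ᗮ)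
    (hdecomp : y = ytil + yperp) (hsmall : ‖yperp‖ ≤ ε * ‖ytil‖)
    (hη : ∀ j, j ≠ k → ‖(proj (W j)).comp (proj (W k))‖ < 1 - ε) :
    ∀ j, j ≠ k → ‖proj (W j) y‖ < ‖proj (W k) y‖ :=
  stmt2_general W k ε y ytil yperp hytil hytil0 hyperp hdecomp hsmall hη
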